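/- For all real numbers a, b with 0 < a ≤ b and p > 1, one has (b^(p-1) - a^(p-1))/(p-1) ≤ (b - a)*(b^p + a^p)/(2*a*b). -/

import Mathlib

/-!
Substituting `t = 1/x` turns the left-hand side into `∫_{1/b}^{1/a} t^(-p) dt`, and the right-hand
side is the trapezoid `(1/a - 1/b) * ((1/b)^(-p) + (1/a)^(-p)) / 2` over the same interval. Since
`t ↦ t^(-p)` is convex on `(0, ∞)`, its graph lies below the chord, so the integral is at most the
trapezoid.
-/

open Set Real intervalIntegral

lemma convexOn_rpow_of_nonpos {q : ℝ} (hq : q ≤ 0) : ConvexOn ℝ (Ioi 0) fun x : ℝ ↦ x ^ q := by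
  refine ⟨convex_Ioi 0, fun x (hx : 0 < x) y (hy : 0 < y) a b ha hb hab ↦ ?_⟩
  have hxy : 0 < a • x + b • y := convex_Ioi (0 : ℝ) hx hy ha hb hab
  have hlog : a • log x + b • log y ≤ log (a • x + b • y) :=
    strictConcaveOn_log_Ioi.concaveOn.2 hx hy ha hb hab
  simp only [smul_eq_mul] at *
  rw [rpow_def_of_pos hx, rpow_def_of_pos hy, rpow_def_of_pos hxy]
  calc exp (log (a * x + b * y) * q) ≤ exp (a * (log x * q) + b * (log y * q)) := by
        gcongr
        nlinarith [mul_le_mul_of_nonpos_right hlog hq]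
    _ ≤ a * exp (log x * q) + b * exp (log y * q) :=
        convexOn_exp.2 (mem_univ _) (mem_univ _) ha hb hab

lemma ConvexOn.le_chord {f : ℝ → ℝ} {c d t : ℝ} (hf : ConvexOn ℝ (Icc c d) f)
    (ht : t ∈ Icc c d) : f t ≤ f c + (f d - f c) / (d - c) * (t - c) := by
  obtain ⟨hct, htd⟩ := ht
  rcases hct.eq_or_lt with rfl | hct
  · simp
  rcases htd.eq_or_lt with rfl | htd
  · simp [div_mul_cancel₀ _ (sub_ne_zero.2 hct.ne')]
  have hdc : 0 < d - c := by linarith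
  have key := hf.secant_mono_aux1 (left_mem_Icc.2 (hct.trans htd).le)
    (right_mem_Icc.2 (hct.trans htd).le) hct htd
  rw [div_mul_eq_mul_div, ← sub_le_iff_le_add', le_div_iff₀ hdc]
  linarith

lemma integral_chord (c d A B : ℝ) :
    ∫ t in c..d, (A + (B - A) / (d - c) * (t - c)) = (d - c) * (A + B) / 2 := by
  rw [integral_add intervalIntegrable_const (Continuous.intervalIntegrable (by fun_prop) _ _),
    integral_const, integral_const_mul, integral_comp_sub_right (fun x ↦ x), integral_id,
    smul_eq_mul]
  rcases eq_or_ne d c with rfl | hdc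
  · simp
  field_simp
  ring

theorem ConvexOn.integral_le_trapezoid {f : ℝ → ℝ} {c d : ℝ} (hcd : c ≤ d)
    (hf : ConvexOn ℝ (Icc c d) f) (hfi : IntervalIntegrable f MeasureTheory.volume c d) :
    ∫ t in c..d, f t ≤ (d - c) * (f c + f d) / 2 := by
  rw [← integral_chord]
  exact integral_mono_on hcd hfi (Continuous.intervalIntegrable (by fun_prop) _ _)
    fun t ht ↦ hf.le_chord ht

lemma inv_rpow_neg {x : ℝ} (hx : 0 ≤ x) (y : ℝ) : x⁻¹ ^ (-y) = x ^ y := by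
  rw [inv_rpow hx, rpow_neg hx, inv_inv]

lemma integral_inv_inv_rpow_neg {a b p : ℝ} (ha : 0 < a) (hb : 0 < b) (hp : p ≠ 1) :
    ∫ t in b⁻¹..a⁻¹, t ^ (-p) = (b ^ (p - 1) - a ^ (p - 1)) / (p - 1) := by
  have h0 : (0 : ℝ) ∉ uIcc b⁻¹ a⁻¹ := notMem_uIcc_of_lt (inv_pos.2 hb) (inv_pos.2 ha)
  rw [integral_rpow (Or.inr ⟨by contrapose! hp; linarith, h0⟩), show -p + 1 = -(p - 1) by ring,
    inv_rpow_neg ha.le, inv_rpow_neg hb.le, div_neg, ← neg_div, neg_sub]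

/-- Convexity estimate for t ↦ t^(-p). -/
theorem convexity_estimate (a b p : ℝ) (ha : 0 < a) (hab : a ≤ b) (hp : 1 < p) :
    (b ^ (p - 1) - a ^ (p - 1)) / (p - 1) ≤ (b - a) * (b ^ p + a ^ p) / (2 * a * b) := by
  have hb : 0 < b := ha.trans_le hab
  have hconv : ConvexOn ℝ (Icc b⁻¹ a⁻¹) fun t : ℝ ↦ t ^ (-p) :=
    (convexOn_rpow_of_nonpos (by linarith)).subset
      (fun t ht ↦ (inv_pos.2 hb).trans_le ht.1) (convex_Icc _ _)
  have hint : IntervalIntegrable (fun t : ℝ ↦ t ^ (-p)) MeasureTheory.volume b⁻¹ a⁻¹ :=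
    intervalIntegrable_rpow (Or.inr (notMem_uIcc_of_lt (inv_pos.2 hb) (inv_pos.2 ha)))
  calc (b ^ (p - 1) - a ^ (p - 1)) / (p - 1) = ∫ t in b⁻¹..a⁻¹, t ^ (-p) :=
        (integral_inv_inv_rpow_neg ha hb hp.ne').symm
    _ ≤ (a⁻¹ - b⁻¹) * (b⁻¹ ^ (-p) + a⁻¹ ^ (-p)) / 2 :=
        hconv.integral_le_trapezoid (inv_anti₀ ha hab) hint
    _ = (b - a) * (b ^ p + a ^ p) / (2 * a * b) := by
        rw [inv_rpow_neg ha.le, inv_rpow_neg hb.le]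
        field_simp
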